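/- Let p₁, p₂, p₃ ∈ ℝ³ be pairwise distinct, and suppose that for every pair i ≠ j one has (p_{i,1}, p_{i,2}) ≠ (p_{j,1}, p_{j,2}) and, for the remaining index k, the representative q_k = (p_{k,1}, p_{k,2}, |p_{k,3}|) satisfies: either ‖q_k − c_{p_i,p_j}‖ < r_{p_i,p_j}, or there is no β ∈ [0, 1] with (p_{k,1}, p_{k,2}) = β(p_{i,1}, p_{i,2}) + (1 − β)(p_{j,1}, p_{j,2}). Then for every m ∈ {1, 2, 3} there exists t ∈ T such that ‖t − p_m‖ < ‖t − p_l‖ for both l ≠ m. (Lemma 3, third case: under condition (10) every pursuer can reach some point of the target plane strictly before the other two, so the barrier depends on all three pursuers.) -/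

import Mathlib

/-!
Fix a pursuer `x` and let `y`, `z` be the other two, with `c ∈ T` equidistant from them.
If `q_x` lies inside the circle, `c` itself works: since `c ∈ T`, reflecting `x` in `T` gives
`‖c - x‖ = ‖q_x - c‖ < ‖c - y‖ = ‖c - z‖`.
Otherwise, for `t ∈ T` the inequality `‖t - x‖ < ‖t - y‖` describes an open half-plane
`2⟪t, a⟫ < ‖y‖² - ‖x‖²`, where `a` is the projection of `y - x` onto `T`; likewise with `b`
for `z`. These half-planes meet unless `a`, `b` point in opposite directions (or one vanishes),
i.e. unless the projection of `x` lies on the segment between those of `y` and `z`. When they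
are not opposite, `w = ‖b‖ a + ‖a‖ b` satisfies `2‖b‖⟪w, a⟫ = ‖w‖² > 0` (and symmetrically),
so `t = -s w` works for `s` large.
-/

noncomputable section

/-- The point of `ℝ³` with the given three coordinates. -/
def mk3 (x y z : ℝ) : EuclideanSpace ℝ (Fin 3) :=
  (WithLp.equiv 2 (Fin 3 → ℝ)).symm ![x, y, z]

/-- The projection of a point onto the target plane `T = {z | z₃ = 0}`. -/
def projT (p : EuclideanSpace ℝ (Fin 3)) : EuclideanSpace ℝ (Fin 3) :=
  mk3 (p 0) (p 1) 0

open Filter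
open scoped RealInnerProductSpace

section InnerProductSpace

variable {E : Type*} [NormedAddCommGroup E] [InnerProductSpace ℝ E]

theorem norm_sub_lt_norm_sub_iff_inner_lt (t x y : E) :
    ‖t - x‖ < ‖t - y‖ ↔ 2 * ⟪t, y - x⟫ < ‖y‖ ^ 2 - ‖x‖ ^ 2 := by
  rw [← sq_lt_sq₀ (norm_nonneg _) (norm_nonneg _), norm_sub_sq_real, norm_sub_sq_real,
    inner_sub_right]
  constructor <;> intro h <;> linarith

theorem two_mul_norm_mul_inner_norm_smul_add_norm_smul (a b : E) :
    2 * ‖b‖ * ⟪‖b‖ • a + ‖a‖ • b, a⟫ = ‖‖b‖ • a + ‖a‖ • b‖ ^ 2 := by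
  rw [← real_inner_self_eq_norm_sq]
  simp only [inner_add_left, inner_add_right, real_inner_smul_left, real_inner_smul_right,
    real_inner_self_eq_norm_sq, real_inner_comm a b, norm_smul, norm_norm, mul_pow]
  ring

theorem inner_norm_smul_add_norm_smul_pos {a b : E} (h : ‖b‖ • a + ‖a‖ • b ≠ 0) :
    0 < ⟪‖b‖ • a + ‖a‖ • b, a⟫ := by
  have hpos : 0 < 2 * ‖b‖ * ⟪‖b‖ • a + ‖a‖ • b, a⟫ := by
    rw [two_mul_norm_mul_inner_norm_smul_add_norm_smul]
    positivity
  exact pos_of_mul_pos_right hpos (by positivity)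

theorem zero_mem_segment_of_norm_smul_add_norm_smul_eq_zero {a b : E}
    (h : ‖b‖ • a + ‖a‖ • b = 0) : (0 : E) ∈ segment ℝ a b := by
  rcases eq_or_ne a 0 with rfl | ha
  · exact left_mem_segment ℝ 0 b
  have hs : 0 < ‖a‖ + ‖b‖ := by positivity
  refine ⟨‖b‖ / (‖a‖ + ‖b‖), ‖a‖ / (‖a‖ + ‖b‖), by positivity, by positivity,
    by field_simp; ring, ?_⟩
  rw [div_eq_inv_mul, div_eq_inv_mul, mul_smul, mul_smul, ← smul_add, h, smul_zero]

theorem Submodule.exists_mem_norm_sub_lt_of_zero_notMem_segment (K : Submodule ℝ E)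
    [K.HasOrthogonalProjection] {x y z : E}
    (h : (0 : E) ∉ segment ℝ (K.starProjection (y - x)) (K.starProjection (z - x))) :
    ∃ t ∈ K, ‖t - x‖ < ‖t - y‖ ∧ ‖t - x‖ < ‖t - z‖ := by
  set a := K.starProjection (y - x)
  set b := K.starProjection (z - x)
  set w := ‖b‖ • a + ‖a‖ • b with hw_def
  have hw : w ≠ 0 := fun hw => h (zero_mem_segment_of_norm_smul_add_norm_smul_eq_zero hw)
  have hwa : 0 < ⟪w, a⟫ := inner_norm_smul_add_norm_smul_pos hw
  have hwb : 0 < ⟪w, b⟫ := by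
    rw [hw_def, add_comm] at hw ⊢
    exact inner_norm_smul_add_norm_smul_pos hw
  have hwK : w ∈ K := K.add_mem (K.smul_mem _ (K.starProjection_apply_mem _))
    (K.smul_mem _ (K.starProjection_apply_mem _))
  have hinner (t : E) (ht : t ∈ K) (v : E) : ⟪t, v⟫ = ⟪t, K.starProjection v⟫ := by
    rw [← inner_starProjection_left_eq_right, K.starProjection_eq_self_iff.mpr ht]
  obtain ⟨s, hsa, hsb⟩ :=
    (((tendsto_id.atTop_mul_const hwa).eventually_gt_atTop (-(‖y‖ ^ 2 - ‖x‖ ^ 2) / 2)).and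
      ((tendsto_id.atTop_mul_const hwb).eventually_gt_atTop (-(‖z‖ ^ 2 - ‖x‖ ^ 2) / 2))).exists
  have htK : -(s • w) ∈ K := K.neg_mem (K.smul_mem s hwK)
  refine ⟨-(s • w), htK, ?_, ?_⟩ <;>
    rw [norm_sub_lt_norm_sub_iff_inner_lt, hinner _ htK, inner_neg_left, real_inner_smul_left]
  · simp only [id] at hsa; linarith
  · simp only [id] at hsb; linarith

end InnerProductSpace

def targetPlane : Submodule ℝ (EuclideanSpace ℝ (Fin 3)) :=
  LinearMap.ker (EuclideanSpace.proj (𝕜 := ℝ) (2 : Fin 3)).toLinearMap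

theorem mem_targetPlane {t : EuclideanSpace ℝ (Fin 3)} : t ∈ targetPlane ↔ t 2 = 0 := by
  simp [targetPlane]

theorem targetPlane_starProjection (v : EuclideanSpace ℝ (Fin 3)) :
    targetPlane.starProjection v = projT v := by
  refine Submodule.eq_starProjection_of_mem_of_inner_eq_zero (by simp [mem_targetPlane, projT, mk3])
    fun w hw => ?_
  simp [EuclideanSpace.inner_eq_star_dotProduct, dotProduct, Fin.sum_univ_three, projT, mk3,
    Matrix.vecHead, Matrix.vecTail, mem_targetPlane.1 hw]

theorem projT_sub (x y : EuclideanSpace ℝ (Fin 3)) : projT (x - y) = projT x - projT y := by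
  ext i; fin_cases i <;> simp [projT, mk3]

theorem norm_mk3_abs_sub (x c : EuclideanSpace ℝ (Fin 3)) (hc : c 2 = 0) :
    ‖mk3 (x 0) (x 1) |x 2| - c‖ = ‖c - x‖ := by
  simp [EuclideanSpace.norm_eq, Fin.sum_univ_three, mk3, hc, sq_abs]
  ring_nf

theorem exists_convex_comb_of_zero_mem_segment_projT {x y z : EuclideanSpace ℝ (Fin 3)}
    (h : (0 : EuclideanSpace ℝ (Fin 3)) ∈ segment ℝ (projT y - projT x) (projT z - projT x)) :
    ∃ β : ℝ, 0 ≤ β ∧ β ≤ 1 ∧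
      x 0 = β * y 0 + (1 - β) * z 0 ∧ x 1 = β * y 1 + (1 - β) * z 1 := by
  obtain ⟨β, γ, hβ, hγ, hβγ, h⟩ := h
  obtain rfl : γ = 1 - β := by linarith
  have h0 := congrArg (· 0) h
  have h1 := congrArg (· 1) h
  simp [projT, mk3] at h0 h1
  exact ⟨β, hβ, by linarith, by linarith, by linarith⟩

theorem exists_mem_targetPlane_norm_sub_lt {x y z c : EuclideanSpace ℝ (Fin 3)}
    (hc : c 2 = 0) (hceq : ‖c - y‖ = ‖c - z‖)
    (hcond : ‖mk3 (x 0) (x 1) |x 2| - c‖ < ‖y - c‖ ∨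
      ¬∃ β : ℝ, 0 ≤ β ∧ β ≤ 1 ∧
        x 0 = β * y 0 + (1 - β) * z 0 ∧ x 1 = β * y 1 + (1 - β) * z 1) :
    ∃ t : EuclideanSpace ℝ (Fin 3), t 2 = 0 ∧ ‖t - x‖ < ‖t - y‖ ∧ ‖t - x‖ < ‖t - z‖ := by
  rcases hcond with hinside | hoff
  · have hy : ‖c - x‖ < ‖c - y‖ := by rwa [← norm_mk3_abs_sub x c hc, norm_sub_rev c y]
    exact ⟨c, hc, hy, hceq ▸ hy⟩
  · have hseg : (0 : EuclideanSpace ℝ (Fin 3)) ∉ segment ℝ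
        (targetPlane.starProjection (y - x)) (targetPlane.starProjection (z - x)) := by
      rw [targetPlane_starProjection, targetPlane_starProjection, projT_sub, projT_sub]
      exact fun h => hoff (exists_convex_comb_of_zero_mem_segment_projT h)
    obtain ⟨t, ht, hty, htz⟩ := targetPlane.exists_mem_norm_sub_lt_of_zero_notMem_segment hseg
    exact ⟨t, mem_targetPlane.1 ht, hty, htz⟩

theorem Fin.exists_other_two (m : Fin 3) :
    ∃ i j : Fin 3, i ≠ j ∧ m ≠ i ∧ m ≠ j ∧ ∀ l, l ≠ m → l = i ∨ l = j := by
  fin_cases m <;> decide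

theorem three_pursuer_all_active_general (p : Fin 3 → EuclideanSpace ℝ (Fin 3))
    (c : Fin 3 → Fin 3 → EuclideanSpace ℝ (Fin 3))
    (hcT : ∀ i j, i ≠ j → c i j 2 = 0)
    (hceq : ∀ i j, i ≠ j → ‖c i j - p i‖ = ‖c i j - p j‖)
    (hcond : ∀ i j k : Fin 3, i ≠ j → k ≠ i → k ≠ j →
      ‖mk3 (p k 0) (p k 1) |p k 2| - c i j‖ < ‖p i - c i j‖ ∨
      ¬∃ β : ℝ, 0 ≤ β ∧ β ≤ 1 ∧
        p k 0 = β * p i 0 + (1 - β) * p j 0 ∧ p k 1 = β * p i 1 + (1 - β) * p j 1) :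
    ∀ m : Fin 3, ∃ t : EuclideanSpace ℝ (Fin 3), t 2 = 0 ∧
      ∀ l, l ≠ m → ‖t - p m‖ < ‖t - p l‖ := by
  intro m
  obtain ⟨i, j, hij, hmi, hmj, hothers⟩ := Fin.exists_other_two m
  obtain ⟨t, ht, hti, htj⟩ :=
    exists_mem_targetPlane_norm_sub_lt (hcT i j hij) (hceq i j hij) (hcond i j m hij hmi hmj)
  refine ⟨t, ht, fun l hl => ?_⟩
  rcases hothers l hl with rfl | rfl
  exacts [hti, htj]

/-- Lemma 3 (third case): if for every pair `i ≠ j` the horizontal projections differ and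
the representative `q_k = (p_{k,1}, p_{k,2}, |p_{k,3}|)` of the remaining pursuer lies
strictly inside the circle of radius `r_{p_i,p_j}` centered at `c_{p_i,p_j}`, or its
horizontal projection is not on the segment joining the projections of `p_i` and `p_j`,
then every pursuer can reach some point of the target plane strictly before the other
two — the barrier depends on all three pursuers. -/
theorem three_pursuer_all_active (p : Fin 3 → EuclideanSpace ℝ (Fin 3))
    (hdist : Function.Injective p)
    (c : Fin 3 → Fin 3 → EuclideanSpace ℝ (Fin 3))
    (hproj : ∀ i j, i ≠ j → (p i 0, p i 1) ≠ (p j 0, p j 1))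
    (hcT : ∀ i j, i ≠ j → c i j 2 = 0)
    (hcline : ∀ i j, i ≠ j →
      ∃ u : ℝ, c i j = projT (p i) + u • (projT (p j) - projT (p i)))
    (hceq : ∀ i j, i ≠ j → ‖c i j - p i‖ = ‖c i j - p j‖)
    (hcond : ∀ i j k : Fin 3, i ≠ j → k ≠ i → k ≠ j →
      ‖mk3 (p k 0) (p k 1) |p k 2| - c i j‖ < ‖p i - c i j‖ ∨
      ¬∃ β : ℝ, 0 ≤ β ∧ β ≤ 1 ∧
        p k 0 = β * p i 0 + (1 - β) * p j 0 ∧ p k 1 = β * p i 1 + (1 - β) * p j 1) :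
    ∀ m : Fin 3, ∃ t : EuclideanSpace ℝ (Fin 3), t 2 = 0 ∧
      ∀ l, l ≠ m → ‖t - p m‖ < ‖t - p l‖ :=
  three_pursuer_all_active_general p c hcT hceq hcond
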